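/- Let Γ and Λ be countable discrete groups acting on a σ-finite measure space (Ω, m) by commuting measure-preserving measurable actions, and let Y ⊆ Ω be a measurable fundamental domain for the Λ-action with 0 < m(Y) < ∞. Let H be a complex Hilbert space, φ : Λ → ℂ, and ξ, η : Λ → H bounded functions with φ(t⁻¹s) = ⟨ξ(s), η(t)⟩ for all s, t ∈ Λ. For γ ∈ Γ define ξ̂(γ) = (1/√m(Y)) Σ_{s∈Λ} 1_{γ(sY) ∩ Y} ⊗ ξ(s) and η̂(γ) = (1/√m(Y)) Σ_{t∈Λ} 1_{γ(tY) ∩ Y} ⊗ η(t) in the Hilbert space tensor product L²(Ω, m) ⊗ H. Then these sums converge in norm, ‖ξ̂(γ)‖ ≤ sup_s ‖ξ(s)‖ and ‖η̂(γ)‖ ≤ sup_t ‖η(t)‖ for all γ ∈ Γ, and for all γ₁, γ₂ ∈ Γ one has ⟨ξ̂(γ₁), η̂(γ₂)⟩ = φ̂(γ₂⁻¹γ₁), where φ̂(γ) = (1/m(Y)) Σ_{s∈Λ} φ(s) m(γ(sY) ∩ Y). -/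

import Mathlib

open MeasureTheory Filter
open scoped Pointwise ENNReal Topology

set_option maxHeartbeats 2000000

section AuxLemmas
variable {α : Type*} [MeasurableSpace α] {μ : Measure α}
  {H : Type*} [NormedAddCommGroup H] [InnerProductSpace ℂ H]

lemma inner_indicatorConstLp_indicatorConstLp
    {A B : Set α} (hA : MeasurableSet A) (hB : MeasurableSet B)
    (hA' : μ A ≠ ⊤) (hB' : μ B ≠ ⊤) (c d : H) :
    (inner ℂ (indicatorConstLp 2 hA hA' c) (indicatorConstLp 2 hB hB' d) : ℂ)
      = ((μ (A ∩ B)).toReal : ℂ) * inner ℂ c d := by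
  rw [L2.inner_indicatorConstLp_eq_setIntegral_inner]
  have hcoe : ∀ᵐ x ∂(μ.restrict A),
      (inner ℂ c ((indicatorConstLp 2 hB hB' d : Lp H 2 μ) x) : ℂ)
        = B.indicator (fun _ => (inner ℂ c d : ℂ)) x := by
    filter_upwards [ae_restrict_of_ae (indicatorConstLp_coeFn (p := 2) (hs := hB)
      (hμs := hB') (c := d))] with x hx
    rw [hx]
    by_cases hxB : x ∈ B
    · simp [Set.indicator_of_mem hxB]
    · simp [Set.indicator_of_notMem hxB]
  rw [integral_congr_ae hcoe, setIntegral_indicator hB, setIntegral_const]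
  simp [Complex.real_smul, Measure.real]

lemma summable_indicatorConstLp_and_norm_tsum_le
    {ι : Type*} [Countable ι] {A : ι → Set α} (hmeas : ∀ i, MeasurableSet (A i))
    (hfin : ∀ i, μ (A i) ≠ ⊤)
    (hdisj : ∀ i j, i ≠ j → μ (A i ∩ A j) = 0)
    (hsum : Summable fun i => (μ (A i)).toReal)
    (v : ι → H) (C : ℝ) (hC : 0 ≤ C) (hv : ∀ i, ‖v i‖ ≤ C) :
    Summable (fun i => indicatorConstLp 2 (hmeas i) (hfin i) (v i)) ∧
    ‖∑' i, indicatorConstLp 2 (hmeas i) (hfin i) (v i)‖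
      ≤ C * Real.sqrt (∑' i, (μ (A i)).toReal) := by
  classical
  set f := fun i => indicatorConstLp (E := H) (μ := μ) 2 (hmeas i) (hfin i) (v i) with hf
  set g := fun i => (μ (A i)).toReal with hg
  have hg0 : ∀ i, 0 ≤ g i := fun i => ENNReal.toReal_nonneg
  have hfnormsq : ∀ (F : Finset ι),
      ‖∑ i ∈ F, f i‖ ^ 2 = ∑ i ∈ F, ‖v i‖ ^ 2 * g i := by
    intro F
    have h1 : (‖∑ i ∈ F, f i‖ : ℝ) ^ 2
        = RCLike.re (inner ℂ (∑ i ∈ F, f i) (∑ i ∈ F, f i) : ℂ) :=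
      norm_sq_eq_re_inner (𝕜 := ℂ) _
    rw [h1, sum_inner, map_sum]
    refine Finset.sum_congr rfl fun i hi => ?_
    rw [inner_sum, Finset.sum_eq_single i]
    · rw [hf]
      simp only
      rw [inner_indicatorConstLp_indicatorConstLp]
      rw [Set.inter_self,
        show (((μ (A i)).toReal : ℂ)) = RCLike.ofReal ((μ (A i)).toReal) from rfl,
        RCLike.re_ofReal_mul, ← norm_sq_eq_re_inner (𝕜 := ℂ), mul_comm]
    · intro j _ hji
      rw [hf]
      simp only
      rw [inner_indicatorConstLp_indicatorConstLp, hdisj i j (Ne.symm hji)]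
      simp
    · intro hii
      exact absurd hi hii
  have hbound : ∀ (F : Finset ι), ‖∑ i ∈ F, f i‖ ^ 2 ≤ C ^ 2 * ∑ i ∈ F, g i := by
    intro F
    rw [hfnormsq F, Finset.mul_sum]
    refine Finset.sum_le_sum fun i _ => ?_
    exact mul_le_mul_of_nonneg_right
      (pow_le_pow_left₀ (norm_nonneg _) (hv i) 2) (hg0 i)
  -- total mass is finite in ℝ≥0∞
  have htot : ∑' i, μ (A i) ≠ ⊤ := by
    have : ∑' i, μ (A i) = ENNReal.ofReal (∑' i, g i) := by
      rw [ENNReal.ofReal_tsum_of_nonneg hg0 hsum]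
      exact tsum_congr fun i => (ENNReal.ofReal_toReal (hfin i)).symm
    rw [this]; exact ENNReal.ofReal_ne_top
  -- disjointify the sets
  obtain ⟨e, he⟩ := Countable.exists_injective_nat ι
  set D : ι → Set α := fun i => A i \ ⋃ (j : ι) (_ : e j < e i), A j with hD
  have hDmeas : ∀ i, MeasurableSet (D i) := fun i =>
    (hmeas i).diff (MeasurableSet.iUnion fun j => MeasurableSet.iUnion fun _ => hmeas j)
  have hDsub : ∀ i, D i ⊆ A i := fun i => Set.diff_subset
  have hkey : ∀ i j, e i < e j → Disjoint (D i) (D j) := by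
    intro i j hlt
    refine Set.disjoint_left.mpr fun x hxi hxj => ?_
    exact hxj.2 (Set.mem_iUnion.mpr ⟨i, Set.mem_iUnion.mpr ⟨hlt, hxi.1⟩⟩)
  have hDdisj : ∀ i j, i ≠ j → Disjoint (D i) (D j) := by
    intro i j hij
    rcases lt_or_gt_of_ne (fun hcon : e i = e j => hij (he hcon)) with hlt | hlt
    · exact hkey i j hlt
    · exact (hkey j i hlt).symm
  have hDae : ∀ i, D i =ᵐ[μ] A i := by
    intro i
    rw [MeasureTheory.ae_eq_set]
    constructor
    · refine measure_mono_null (fun x hx => ?_) (measure_empty (μ := μ))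
      exact absurd (hDsub i hx.1) hx.2
    · refine measure_mono_null (t := ⋃ (j : ι) (_ : e j < e i), (A i ∩ A j)) ?_ ?_
      · intro x hx
        have hx2 : x ∈ ⋃ (j : ι) (_ : e j < e i), A j := by
          by_contra hcon
          exact hx.2 ⟨hx.1, hcon⟩
        obtain ⟨j, hj⟩ := Set.mem_iUnion.mp hx2
        obtain ⟨hlt, hxj⟩ := Set.mem_iUnion.mp hj
        exact Set.mem_iUnion.mpr ⟨j, Set.mem_iUnion.mpr ⟨hlt, hx.1, hxj⟩⟩
      · refine measure_iUnion_null fun j => measure_iUnion_null fun hlt => ?_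
        exact hdisj i j (fun hcon => by subst hcon; exact lt_irrefl _ hlt)
  have hDm : ∀ i, μ (D i) = μ (A i) := fun i => measure_congr (hDae i)
  have hDfin : ∀ i, μ (D i) ≠ ⊤ := fun i => (hDm i).symm ▸ hfin i
  have hDtot : ∑' i, μ (D i) ≠ ⊤ := by rw [tsum_congr hDm]; exact htot
  have hfeq : ∀ i, f i = indicatorConstLp 2 (hDmeas i) (hDfin i) (v i) := by
    intro i
    refine Lp.ext ?_
    filter_upwards [indicatorConstLp_coeFn (p := 2) (hs := hmeas i) (hμs := hfin i) (c := v i),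
      indicatorConstLp_coeFn (p := 2) (hs := hDmeas i) (hμs := hDfin i) (c := v i),
      Filter.eventuallyEq_set.mp (hDae i)] with x h1 h2 h3
    rw [hf]; simp only
    rw [h1, h2, Set.indicator_apply, Set.indicator_apply, if_congr h3.symm rfl rfl]
  set U := ⋃ i, D i with hU
  have hUmeas : MeasurableSet U := MeasurableSet.iUnion hDmeas
  have hUfin : μ U ≠ ⊤ := ne_top_of_le_ne_top hDtot (measure_iUnion_le D)
  -- the limit function
  set h : α → H := fun x => ∑' i, (D i).indicator (fun _ => v i) x with hdefh
  have hval : ∀ i, ∀ x ∈ D i, h x = v i := by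
    intro i x hx
    have hz : ∀ j, j ≠ i → (D j).indicator (fun _ => v j) x = 0 := fun j hj =>
      Set.indicator_of_notMem (fun hxj => Set.disjoint_left.mp (hDdisj j i hj) hxj hx) _
    rw [hdefh]; simp only
    rw [tsum_eq_single i hz]
    exact Set.indicator_of_mem hx _
  have hzero : ∀ x, x ∉ U → h x = 0 := by
    intro x hx
    have hz : ∀ i, (D i).indicator (fun _ => v i) x = 0 := fun i =>
      Set.indicator_of_notMem (fun h' => hx (Set.mem_iUnion.mpr ⟨i, h'⟩)) _
    rw [hdefh]; simp only
    rw [tsum_congr hz, tsum_zero]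
  set P : Finset ι → α → H := fun F x => ∑ i ∈ F, (D i).indicator (fun _ => v i) x with hP
  have hPmeas : ∀ F, StronglyMeasurable (P F) := fun F =>
    by
      convert Finset.stronglyMeasurable_sum (f := fun i => (D i).indicator fun _ => v i) F
        fun i _ => stronglyMeasurable_const.indicator (hDmeas i) using 1
      ext x; simp [hP, Finset.sum_apply]
  have hPval : ∀ (F : Finset ι) (x), x ∉ U → P F x = 0 := fun F x hx =>
    Finset.sum_eq_zero fun i _ =>
      Set.indicator_of_notMem (fun h' => hx (Set.mem_iUnion.mpr ⟨i, h'⟩)) _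
  have hPval2 : ∀ (F : Finset ι) (i), i ∈ F → ∀ x ∈ D i, P F x = v i := by
    intro F i hiF x hx
    rw [hP]; simp only
    rw [Finset.sum_eq_single i
      (fun j _ hji => Set.indicator_of_notMem
        (fun hxj => Set.disjoint_left.mp (hDdisj j i hji) hxj hx) _)
      (fun hni => absurd hiF hni)]
    exact Set.indicator_of_mem hx _
  have hPval3 : ∀ (F : Finset ι) (i), i ∉ F → ∀ x ∈ D i, P F x = 0 := by
    intro F i hiF x hx
    refine Finset.sum_eq_zero fun j hj => ?_
    refine Set.indicator_of_notMem (fun hxj => ?_) _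
    have hji : j ≠ i := fun hcon => hiF (hcon ▸ hj)
    exact Set.disjoint_left.mp (hDdisj j i hji) hxj hx
  have hlim : ∀ x, Tendsto (fun F : Finset ι => P F x) atTop (𝓝 (h x)) := by
    intro x
    by_cases hx : x ∈ U
    · obtain ⟨i, hxi⟩ := Set.mem_iUnion.mp hx
      have hev : ∀ᶠ F : Finset ι in atTop, P F x = h x := by
        filter_upwards [eventually_ge_atTop ({i} : Finset ι)] with F hF
        have hiF : i ∈ F := hF (Finset.mem_singleton_self i)
        rw [hval i x hxi, hPval2 F i hiF x hxi]
      exact Tendsto.congr' (hev.mono fun F hF => hF.symm) tendsto_const_nhds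
    · have h0 : Tendsto (fun F : Finset ι => P F x) atTop (𝓝 (0 : H)) :=
        Tendsto.congr (fun F => (hPval F x hx).symm) tendsto_const_nhds
      simpa [hzero x hx] using h0
  have hSM : StronglyMeasurable h :=
    stronglyMeasurable_of_tendsto atTop hPmeas (tendsto_pi_nhds.mpr hlim)
  have hmemh : MemLp h 2 μ := by
    refine MemLp.of_le (memLp_indicator_const 2 hUmeas (C : ℝ) (Or.inr hUfin))
      hSM.aestronglyMeasurable (Filter.Eventually.of_forall fun x => ?_)
    by_cases hx : x ∈ U
    · obtain ⟨i, hxi⟩ := Set.mem_iUnion.mp hx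
      rw [hval i x hxi, Set.indicator_of_mem hx, Real.norm_eq_abs, abs_of_nonneg hC]
      exact hv i
    · rw [hzero x hx]; simp [norm_nonneg]
  set L := hmemh.toLp h with hL
  -- coercion of partial sums
  have hcoe : ∀ F : Finset ι, ⇑(∑ i ∈ F, f i) =ᵐ[μ] P F := by
    intro F
    induction F using Finset.induction_on with
    | empty =>
        simp only [Finset.sum_empty]
        filter_upwards [Lp.coeFn_zero (E := H) 2 μ] with x hx
        rw [hx]; simp [hP]
    | @insert i F hiF ih =>
        rw [Finset.sum_insert hiF]
        filter_upwards [Lp.coeFn_add (f i) (∑ j ∈ F, f j),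
          indicatorConstLp_coeFn (p := 2) (hs := hmeas i) (hμs := hfin i) (c := v i),
          Filter.eventuallyEq_set.mp (hDae i), ih] with x h1 h2 h3 h4
        rw [h1]
        simp only [Pi.add_apply]
        rw [hP]; simp only
        rw [Finset.sum_insert hiF, h4, hf]; simp only
        rw [h2, Set.indicator_apply, Set.indicator_apply, if_congr h3.symm rfl rfl]
  -- distance estimate
  have hdistb : ∀ F : Finset ι,
      dist (∑ i ∈ F, f i) L ≤ C * Real.sqrt ((∑' i : {j : ι // j ∉ F}, μ (D i.1)).toReal) := by
    intro F
    set T : ℝ≥0∞ := ∑' i : {j : ι // j ∉ F}, μ (D i.1) with hT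
    have hTle : T ≤ ∑' i, μ (D i) :=
      ENNReal.tsum_comp_le_tsum_of_injective Subtype.coe_injective fun i => μ (D i)
    have hTfin : T ≠ ⊤ := ne_top_of_le_ne_top hDtot hTle
    set W : Set α := U \ ⋃ i ∈ F, D i with hW
    have hWmeas : MeasurableSet W :=
      hUmeas.diff (F.measurableSet_biUnion fun i _ => hDmeas i)
    have hWle : μ W ≤ T := by
      have hsub : W ⊆ ⋃ i : {j : ι // j ∉ F}, D i.1 := by
        intro x hx
        obtain ⟨i, hxi⟩ := Set.mem_iUnion.mp hx.1
        have hiF : i ∉ F := fun hcon =>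
          hx.2 (Set.mem_biUnion hcon hxi)
        exact Set.mem_iUnion.mpr ⟨⟨i, hiF⟩, hxi⟩
      exact (measure_mono hsub).trans (measure_iUnion_le _)
    have hptw : ∀ x, ‖P F x - h x‖ ≤ ‖W.indicator (fun _ => (C : ℝ)) x‖ := by
      intro x
      by_cases hx : x ∈ U
      · obtain ⟨i, hxi⟩ := Set.mem_iUnion.mp hx
        by_cases hiF : i ∈ F
        · rw [hPval2 F i hiF x hxi, hval i x hxi, sub_self, norm_zero]
          exact norm_nonneg _
        · rw [hPval3 F i hiF x hxi, hval i x hxi, zero_sub, norm_neg]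
          have hxW : x ∈ W := by
            refine ⟨hx, fun hcon => ?_⟩
            obtain ⟨j, hj⟩ := Set.mem_iUnion.mp hcon
            obtain ⟨hjF, hxj⟩ := Set.mem_iUnion.mp hj
            by_cases hji : j = i
            · exact hiF (hji ▸ hjF)
            · exact Set.disjoint_left.mp (hDdisj j i hji) hxj hxi
          rw [Set.indicator_of_mem hxW, Real.norm_eq_abs, abs_of_nonneg hC]
          exact hv i
      · rw [hPval F x hx, hzero x hx, sub_self, norm_zero]
        exact norm_nonneg _
    have help : eLpNorm (fun x => P F x - h x) 2 μ ≤ ENNReal.ofNNReal ‖(C : ℝ)‖₊ * T ^ (1 / (2:ℝ)) := by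
      refine le_trans (eLpNorm_mono hptw) ?_
      rw [eLpNorm_indicator_const hWmeas two_ne_zero ENNReal.ofNat_ne_top]
      have : (2 : ℝ≥0∞).toReal = 2 := by simp
      rw [this]
      exact mul_le_mul_right (ENNReal.rpow_le_rpow hWle (by norm_num)) _
    have hdisteq : dist (∑ i ∈ F, f i) L = (eLpNorm (fun x => P F x - h x) 2 μ).toReal := by
      rw [dist_eq_norm, Lp.norm_def]
      congr 1
      refine eLpNorm_congr_ae ?_
      filter_upwards [Lp.coeFn_sub (∑ i ∈ F, f i) L, hcoe F, MemLp.coeFn_toLp hmemh]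
        with x h1 h2 h3
      rw [h1]; simp only [Pi.sub_apply]; rw [h2, h3]
    rw [hdisteq]
    calc (eLpNorm (fun x => P F x - h x) 2 μ).toReal
        ≤ (ENNReal.ofNNReal ‖(C : ℝ)‖₊ * T ^ (1 / (2:ℝ))).toReal := by
          refine ENNReal.toReal_mono ?_ help
          exact ENNReal.mul_ne_top ENNReal.coe_ne_top
            (ENNReal.rpow_ne_top_of_nonneg (by norm_num) hTfin)
      _ = C * Real.sqrt T.toReal := by
          rw [ENNReal.toReal_mul, ← ENNReal.toReal_rpow, Real.sqrt_eq_rpow]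
          congr 1
          rw [ENNReal.coe_toReal, coe_nnnorm, Real.norm_eq_abs, abs_of_nonneg hC]
  -- convergence
  have hT0 : Tendsto (fun F : Finset ι => ∑' i : {j : ι // j ∉ F}, μ (D i.1)) atTop (𝓝 0) :=
    ENNReal.tendsto_tsum_compl_atTop_zero hDtot
  have hT0' : Tendsto (fun F : Finset ι => (∑' i : {j : ι // j ∉ F}, μ (D i.1)).toReal)
      atTop (𝓝 0) := by
    have := (ENNReal.tendsto_toReal (a := 0) (by simp)).comp hT0
    simpa [Function.comp_def] using this
  have hB0 : Tendsto (fun F : Finset ι =>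
      C * Real.sqrt ((∑' i : {j : ι // j ∉ F}, μ (D i.1)).toReal)) atTop (𝓝 0) := by
    have h1 : Tendsto (fun F : Finset ι =>
        Real.sqrt ((∑' i : {j : ι // j ∉ F}, μ (D i.1)).toReal)) atTop (𝓝 0) := by
      have := (Real.continuous_sqrt.tendsto 0).comp hT0'
      simpa [Function.comp_def] using this
    have := h1.const_mul C
    simpa using this
  have hdist0 : Tendsto (fun F : Finset ι => dist (∑ i ∈ F, f i) L) atTop (𝓝 0) :=
    squeeze_zero (fun F => dist_nonneg) hdistb hB0
  have hHasSum : HasSum f L := tendsto_iff_dist_tendsto_zero.mpr hdist0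
  have hsummable : Summable f := ⟨L, hHasSum⟩
  refine ⟨hsummable, ?_⟩
  have htendsto : Tendsto (fun F : Finset ι => ‖∑ i ∈ F, f i‖) atTop (nhds ‖∑' i, f i‖) :=
    hsummable.hasSum.norm
  refine le_of_tendsto' htendsto fun F => ?_
  have h4 : ‖∑ i ∈ F, f i‖ ^ 2 ≤ C ^ 2 * ∑' i, g i := by
    refine le_trans (hbound F) (mul_le_mul_of_nonneg_left ?_ (sq_nonneg C))
    exact Summable.sum_le_tsum F (fun i _ => hg0 i) hsum
  have h5 : ‖∑ i ∈ F, f i‖ = Real.sqrt (‖∑ i ∈ F, f i‖ ^ 2) :=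
    (Real.sqrt_sq (norm_nonneg _)).symm
  rw [h5]
  refine le_trans (Real.sqrt_le_sqrt h4) ?_
  rw [Real.sqrt_mul (sq_nonneg C), Real.sqrt_sq hC]

end AuxLemmas


/-- The function `φ̂(γ) = (1/m(Y)) Σ_{s∈Λ} φ(s) m(γ(sY) ∩ Y)` induced from `φ : Λ → ℂ`. -/
noncomputable def inducedMultiplier {Ω : Type*} [MeasurableSpace Ω] (m : Measure Ω)
    {Γ Λ : Type*} [Group Γ] [Group Λ] [MulAction Γ Ω] [MulAction Λ Ω]
    (Y : Set Ω) (φ : Λ → ℂ) (γ : Γ) : ℂ :=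
  ((m Y).toReal)⁻¹ * ∑' s : Λ, φ s * ((m ((γ • (s • Y)) ∩ Y)).toReal : ℂ)

/-- The vector `v̂(γ) = (1/√m(Y)) Σ_{s∈Λ} 1_{γ(sY) ∩ Y} ⊗ v(s)` in
`L²(Ω, m; H) ≅ L²(Ω, m) ⊗ H`, where the sets `E s = γ(sY) ∩ Y` together with proofs of their
measurability and finite measure are supplied as parameters. -/
noncomputable def hatVector {Ω : Type*} [MeasurableSpace Ω] (m : Measure Ω)
    {Λ : Type*} {H : Type*} [NormedAddCommGroup H] [NormedSpace ℝ H]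
    (Y : Set Ω) (E : Λ → Set Ω)
    (hmeas : ∀ s, MeasurableSet (E s)) (hfin : ∀ s, m (E s) ≠ ⊤)
    (v : Λ → H) : Lp H 2 m :=
  (Real.sqrt (m Y).toReal)⁻¹ • ∑' s : Λ, indicatorConstLp 2 (hmeas s) (hfin s) (v s)

theorem hatVector_summable_norm_bounds_and_inner_eq
    {Ω : Type*} [MeasurableSpace Ω] (m : Measure Ω) [SigmaFinite m]
    {Γ Λ : Type*} [Group Γ] [Countable Γ] [Group Λ] [Countable Λ]
    [MulAction Γ Ω] [MulAction Λ Ω]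
    (hΓ : ∀ γ : Γ, MeasurePreserving (fun ω => γ • ω) m m)
    (hΛ : ∀ s : Λ, MeasurePreserving (fun ω => s • ω) m m)
    (hcomm : ∀ (γ : Γ) (s : Λ) (ω : Ω), γ • s • ω = s • γ • ω)
    (Y : Set Ω) (hYmeas : MeasurableSet Y) (hY : IsFundamentalDomain Λ Y m)
    (hYpos : 0 < m Y) (hYfin : m Y < ⊤)
    {H : Type*} [NormedAddCommGroup H] [InnerProductSpace ℂ H]
    (φ : Λ → ℂ) (ξ η : Λ → H) (Cξ Cη : ℝ)
    (hξ : ∀ s, ‖ξ s‖ ≤ Cξ) (hη : ∀ t, ‖η t‖ ≤ Cη)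
    (hrep : ∀ s t : Λ, φ (t⁻¹ * s) = (inner ℂ (η t) (ξ s) : ℂ))
    -- the sets `E γ s = γ(sY) ∩ Y`, with their measurability and finiteness witnesses:
    (E : Γ → Λ → Set Ω) (hE : ∀ (γ : Γ) (s : Λ), E γ s = (γ • (s • Y)) ∩ Y)
    (hEmeas : ∀ (γ : Γ) (s : Λ), MeasurableSet (E γ s))
    (hEfin : ∀ (γ : Γ) (s : Λ), m (E γ s) ≠ ⊤) :
    -- the series defining `ξ̂(γ)` and `η̂(γ)` converge in the norm of `L²(Ω, m; H)`:
    (∀ γ : Γ, Summable fun s : Λ =>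
        indicatorConstLp 2 (hEmeas γ s) (hEfin γ s) (ξ s)) ∧
    (∀ γ : Γ, Summable fun t : Λ =>
        indicatorConstLp 2 (hEmeas γ t) (hEfin γ t) (η t)) ∧
    -- `‖ξ̂(γ)‖ ≤ sup_s ‖ξ(s)‖` and `‖η̂(γ)‖ ≤ sup_t ‖η(t)‖`:
    (∀ γ : Γ, ‖hatVector m Y (E γ) (hEmeas γ) (hEfin γ) ξ‖ ≤ Cξ) ∧
    (∀ γ : Γ, ‖hatVector m Y (E γ) (hEmeas γ) (hEfin γ) η‖ ≤ Cη) ∧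
    -- `⟨ξ̂(γ₁), η̂(γ₂)⟩ = φ̂(γ₂⁻¹ γ₁)`:
    ∀ γ₁ γ₂ : Γ,
      (inner ℂ (hatVector m Y (E γ₂) (hEmeas γ₂) (hEfin γ₂) η)
        (hatVector m Y (E γ₁) (hEmeas γ₁) (hEfin γ₁) ξ) : ℂ)
        = inducedMultiplier m Y φ (γ₂⁻¹ * γ₁) := by
  -- instances
  haveI : SMulCommClass Γ Λ Ω := ⟨hcomm⟩
  haveI : SMulCommClass Λ Γ Ω := ⟨fun s γ ω => (hcomm γ s ω).symm⟩
  haveI : SMulInvariantMeasure Γ Ω m :=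
    ⟨fun γ s hs => (hΓ γ).measure_preimage hs.nullMeasurableSet⟩
  haveI : SMulInvariantMeasure Λ Ω m :=
    ⟨fun s t ht => (hΛ s).measure_preimage ht.nullMeasurableSet⟩
  letI : MeasurableSpace Γ := ⊤
  letI : MeasurableSpace Λ := ⊤
  haveI : MeasurableSMul Γ Ω :=
    { measurable_const_smul := fun γ => (hΓ γ).measurable,
      measurable_smul_const := fun _ => measurable_from_top }
  haveI : MeasurableSMul Λ Ω :=
    { measurable_const_smul := fun s => (hΛ s).measurable,
      measurable_smul_const := fun _ => measurable_from_top }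
  -- fundamental domains
  have hFD : ∀ γ : Γ, IsFundamentalDomain Λ (γ • Y) m := fun γ => hY.smul_of_comm γ
  have hsmul_m : ∀ (γ : Γ) (A : Set Ω), m (γ • A) = m A := fun γ A => MeasureTheory.measure_smul (μ := m) γ A
  have hsum_inter : ∀ (γ : Γ) (B : Set Ω), (∑' s : Λ, m (B ∩ γ • (s • Y))) = m B := by
    intro γ B
    rw [(hFD γ).measure_eq_tsum' B]
    exact tsum_congr fun s => by rw [smul_comm s γ Y]
  have htsumE : ∀ γ : Γ, (∑' s : Λ, m (E γ s)) = m Y := by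
    intro γ
    have : ∀ s : Λ, m (E γ s) = m (Y ∩ γ • (s • Y)) := fun s => by
      rw [hE, Set.inter_comm]
    rw [tsum_congr this, hsum_inter γ Y]
  have hgsummable : ∀ γ : Γ, Summable (fun s : Λ => (m (E γ s)).toReal) := fun γ =>
    ENNReal.summable_toReal (by rw [htsumE]; exact hYfin.ne)
  have hgtsum : ∀ γ : Γ, (∑' s : Λ, (m (E γ s)).toReal) = (m Y).toReal := fun γ => by
    rw [← ENNReal.tsum_toReal_eq (hEfin γ), htsumE γ]
  have hdisjE : ∀ (γ : Γ) (s t : Λ), s ≠ t → m (E γ s ∩ E γ t) = 0 := by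
    intro γ s t hst
    have hsub : E γ s ∩ E γ t ⊆ γ • (s • Y ∩ t • Y) := by
      rw [hE, hE, Set.smul_set_inter]
      intro x hx
      exact ⟨hx.1.1, hx.2.1⟩
    refine measure_mono_null hsub ?_
    rw [hsmul_m]
    exact hY.aedisjoint hst
  have hCξ0 : 0 ≤ Cξ := le_trans (norm_nonneg (ξ 1)) (hξ 1)
  have hCη0 : 0 ≤ Cη := le_trans (norm_nonneg (η 1)) (hη 1)
  have keyξ : ∀ γ : Γ, _ := fun γ : Γ => summable_indicatorConstLp_and_norm_tsum_le
    (hEmeas γ) (hEfin γ) (hdisjE γ) (hgsummable γ) ξ Cξ hCξ0 hξ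
  have keyη : ∀ γ : Γ, _ := fun γ : Γ => summable_indicatorConstLp_and_norm_tsum_le
    (hEmeas γ) (hEfin γ) (hdisjE γ) (hgsummable γ) η Cη hCη0 hη
  have hsqY : 0 < Real.sqrt (m Y).toReal :=
    Real.sqrt_pos.mpr (ENNReal.toReal_pos hYpos.ne' hYfin.ne)
  have hnormhat : ∀ (γ : Γ) (v : Λ → H) (C : ℝ), 0 ≤ C → (∀ s, ‖v s‖ ≤ C) →
      ‖hatVector m Y (E γ) (hEmeas γ) (hEfin γ) v‖ ≤ C := by
    intro γ v C hC hv
    have key := summable_indicatorConstLp_and_norm_tsum_le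
      (hEmeas γ) (hEfin γ) (hdisjE γ) (hgsummable γ) v C hC hv
    rw [hatVector, norm_smul, Real.norm_eq_abs, abs_of_nonneg (inv_nonneg.mpr hsqY.le)]
    calc (Real.sqrt (m Y).toReal)⁻¹ * ‖∑' s : Λ, indicatorConstLp 2 (hEmeas γ s) (hEfin γ s) (v s)‖
        ≤ (Real.sqrt (m Y).toReal)⁻¹ * (C * Real.sqrt (∑' s : Λ, (m (E γ s)).toReal)) := by
          exact mul_le_mul_of_nonneg_left key.2 (inv_nonneg.mpr hsqY.le)
      _ = C := by
          rw [hgtsum γ]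
          field_simp
  refine ⟨fun γ => (keyξ γ).1, fun γ => (keyη γ).1,
    fun γ => hnormhat γ ξ Cξ hCξ0 hξ, fun γ => hnormhat γ η Cη hCη0 hη, ?_⟩
  intro γ₁ γ₂
  classical
  set γ : Γ := γ₂⁻¹ * γ₁ with hγdef
  set fξ : Λ → Lp H 2 m := fun s => indicatorConstLp 2 (hEmeas γ₁ s) (hEfin γ₁ s) (ξ s) with hfξ
  set fη : Λ → Lp H 2 m := fun t => indicatorConstLp 2 (hEmeas γ₂ t) (hEfin γ₂ t) (η t) with hfη
  have hSξ : Summable fξ := (keyξ γ₁).1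
  have hSη : Summable fη := (keyη γ₂).1
  set T₁ : Lp H 2 m := ∑' s, fξ s with hT₁
  set T₂ : Lp H 2 m := ∑' t, fη t with hT₂
  set c : ℝ := (Real.sqrt (m Y).toReal)⁻¹ with hc
  have hsmulC : ∀ x : Lp H 2 m, c • x = ((c : ℂ)) • x := by
    intro x
    rw [show ((c : ℂ)) = c • (1 : ℂ) by rw [Complex.real_smul, mul_one], smul_assoc, one_smul]
  have hhat : (inner ℂ (hatVector m Y (E γ₂) (hEmeas γ₂) (hEfin γ₂) η)
      (hatVector m Y (E γ₁) (hEmeas γ₁) (hEfin γ₁) ξ) : ℂ)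
      = ((c * c : ℝ) : ℂ) * inner ℂ T₂ T₁ := by
    rw [hatVector, hatVector, hsmulC, hsmulC, inner_smul_left, inner_smul_right,
      Complex.conj_ofReal]
    push_cast
    ring
  -- the measure kernel
  set M : Λ → Λ → ℝ≥0∞ := fun t s => m (E γ₂ t ∩ E γ₁ s) with hM
  have hMfin : ∀ t s : Λ, M t s ≠ ⊤ := fun t s =>
    ne_top_of_le_ne_top (hEfin γ₂ t) (measure_mono Set.inter_subset_left)
  have hMrow : ∀ t : Λ, (∑' s : Λ, M t s) = m (E γ₂ t) := by
    intro t
    have hseq : ∀ s : Λ, M t s = m (E γ₂ t ∩ γ₁ • (s • Y)) := by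
      intro s
      rw [hM]
      simp only
      congr 1
      rw [hE γ₂ t, hE γ₁ s]
      ext x
      simp only [Set.mem_inter_iff]
      tauto
    rw [tsum_congr hseq, hsum_inter γ₁ (E γ₂ t)]
  have hA : ∀ t u : Λ, γ₂ • (t • (γ • (u • Y))) = γ₁ • ((t * u) • Y) := by
    intro t u
    rw [smul_comm t γ (u • Y), smul_smul γ₂ γ, hγdef, mul_inv_cancel_left, ← mul_smul t u Y]
  have hset : ∀ t u : Λ, E γ₂ t ∩ E γ₁ (t * u) = γ₂ • (t • (γ • (u • Y) ∩ Y) ∩ γ₂⁻¹ • Y) := by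
    intro t u
    have h1 : γ₂ • (t • (γ • (u • Y) ∩ Y) ∩ γ₂⁻¹ • Y)
        = (γ₁ • ((t * u) • Y) ∩ γ₂ • (t • Y)) ∩ Y := by
      rw [Set.smul_set_inter (a := t), Set.smul_set_inter (a := γ₂),
        Set.smul_set_inter (a := γ₂), smul_inv_smul, hA t u]
    rw [h1, hE γ₂ t, hE γ₁ (t * u)]
    ext x
    simp only [Set.mem_inter_iff]
    tauto
  have hkeyM : ∀ u : Λ, (∑' t : Λ, M t (t * u)) = m (γ • (u • Y) ∩ Y) := by
    intro u
    have h1 : ∀ t : Λ, M t (t * u) = m (t • (γ • (u • Y) ∩ Y) ∩ γ₂⁻¹ • Y) := by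
      intro t
      rw [hM]
      simp only
      rw [hset t u, hsmul_m γ₂]
    rw [tsum_congr h1]
    exact ((hFD γ₂⁻¹).measure_eq_tsum (γ • (u • Y) ∩ Y)).symm
  have hφval : ∀ t u : Λ, (inner ℂ (η t) (ξ (t * u)) : ℂ) = φ u := by
    intro t u
    rw [← hrep (t * u) t, inv_mul_cancel_left]
  have hφbound : ∀ u : Λ, ‖φ u‖ ≤ Cη * Cξ := by
    intro u
    have h1 := hrep u 1
    rw [inv_one, one_mul] at h1
    rw [h1]
    exact (norm_inner_le_norm _ _).trans
      (mul_le_mul (hη 1) (hξ u) (norm_nonneg _) hCη0)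
  set G : Λ × Λ → ℂ := fun p => ((M p.1 (p.1 * p.2)).toReal : ℂ) * φ p.2 with hG
  have hrowdiag : ∀ t : Λ, (∑' u : Λ, M t (t * u)) = m (E γ₂ t) := by
    intro t
    rw [← hMrow t]
    exact (Equiv.mulLeft t).tsum_eq (fun s => M t s)
  have hWsum : Summable (fun p : Λ × Λ => (M p.1 (p.1 * p.2)).toReal) := by
    apply ENNReal.summable_toReal
    rw [ENNReal.tsum_prod']
    rw [tsum_congr hrowdiag, htsumE γ₂]
    exact hYfin.ne
  have hGsummable : Summable G := by
    apply Summable.of_norm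
    have hb : ∀ p : Λ × Λ, ‖G p‖ ≤ (Cη * Cξ) * (M p.1 (p.1 * p.2)).toReal := by
      intro p
      rw [hG]
      simp only
      rw [norm_mul, Complex.norm_real, Real.norm_eq_abs, abs_of_nonneg ENNReal.toReal_nonneg,
        mul_comm ((M p.1 (p.1 * p.2)).toReal) ‖φ p.2‖]
      exact mul_le_mul_of_nonneg_right (hφbound p.2) ENNReal.toReal_nonneg
    exact Summable.of_nonneg_of_le (fun p => norm_nonneg _) hb (hWsum.mul_left (Cη * Cξ))
  set Q : Λ × Λ → ℂ := fun p => ((M p.2 p.1).toReal : ℂ) * (inner ℂ (η p.2) (ξ p.1) : ℂ) with hQ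
  set eqv : Λ × Λ ≃ Λ × Λ :=
    { toFun := fun p => (p.1 * p.2, p.1)
      invFun := fun q => (q.2, q.2⁻¹ * q.1)
      left_inv := fun p => by simp
      right_inv := fun q => by simp } with heqv
  have hQG : Q ∘ eqv = G := by
    funext p
    rw [hQ, hG]
    simp only [heqv, Function.comp_apply, Equiv.coe_fn_mk]
    rw [hφval p.1 p.2]
  have hQs : Summable Q := by
    have h1 : Summable (Q ∘ eqv) := by rw [hQG]; exact hGsummable
    exact (eqv.summable_iff (f := Q)).mp h1
  have hinner_eq : (inner ℂ T₂ T₁ : ℂ) = ∑' s : Λ, ∑' t : Λ, Q (s, t) := by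
    have h1 : (inner ℂ T₂ T₁ : ℂ) = ∑' s : Λ, (inner ℂ T₂ (fξ s) : ℂ) := by
      rw [hT₁]
      exact ContinuousLinearMap.map_tsum (innerSL ℂ T₂) hSξ
    rw [h1]
    refine tsum_congr fun s => ?_
    have h2 : (inner ℂ (fξ s) T₂ : ℂ) = ∑' t : Λ, (inner ℂ (fξ s) (fη t) : ℂ) := by
      rw [hT₂]
      exact ContinuousLinearMap.map_tsum (innerSL ℂ (fξ s)) hSη
    calc (inner ℂ T₂ (fξ s) : ℂ)
        = starRingEnd ℂ (inner ℂ (fξ s) T₂ : ℂ) := (inner_conj_symm _ _).symm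
      _ = starRingEnd ℂ (∑' t : Λ, (inner ℂ (fξ s) (fη t) : ℂ)) := by rw [h2]
      _ = ∑' t : Λ, starRingEnd ℂ (inner ℂ (fξ s) (fη t) : ℂ) := by
          rw [show (starRingEnd ℂ) (∑' t : Λ, (inner ℂ (fξ s) (fη t) : ℂ))
              = star (∑' t : Λ, (inner ℂ (fξ s) (fη t) : ℂ)) from rfl, tsum_star]
          rfl
      _ = ∑' t : Λ, (inner ℂ (fη t) (fξ s) : ℂ) := tsum_congr fun t => inner_conj_symm _ _
      _ = ∑' t : Λ, Q (s, t) := by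
          refine tsum_congr fun t => ?_
          rw [hfη, hfξ, hQ]
          simp only
          rw [inner_indicatorConstLp_indicatorConstLp]
  have hq1 : (∑' s : Λ, ∑' t : Λ, Q (s, t)) = ∑' p : Λ × Λ, Q p :=
    (Summable.tsum_prod' hQs (fun s => hQs.prod_factor s)).symm
  have hq2 : (∑' p : Λ × Λ, Q p) = ∑' p : Λ × Λ, G p := by
    rw [← hQG]
    exact (eqv.tsum_eq Q).symm
  have hq3 : (∑' p : Λ × Λ, G p) = ∑' t : Λ, ∑' u : Λ, G (t, u) :=
    Summable.tsum_prod' hGsummable (fun t => hGsummable.prod_factor t)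
  have hq4 : (∑' t : Λ, ∑' u : Λ, G (t, u)) = ∑' u : Λ, ∑' t : Λ, G (t, u) :=
    (Summable.tsum_comm (f := fun t u => G (t, u))
      (by exact hGsummable)).symm
  have hq5 : ∀ u : Λ, (∑' t : Λ, G (t, u)) = ((m (γ • (u • Y) ∩ Y)).toReal : ℂ) * φ u := by
    intro u
    have hsumfin : (∑' t : Λ, M t (t * u)) ≠ ⊤ := by
      rw [hkeyM u]
      exact ne_top_of_le_ne_top hYfin.ne (measure_mono Set.inter_subset_right)
    have h1 : (∑' t : Λ, ((M t (t * u)).toReal : ℂ))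
        = ((m (γ • (u • Y) ∩ Y)).toReal : ℂ) := by
      rw [← Complex.ofReal_tsum, ← ENNReal.tsum_toReal_eq (fun t => hMfin t (t * u)), hkeyM u]
    rw [hG]
    simp only
    rw [tsum_mul_right, h1]
  -- assemble
  rw [hhat, hinner_eq, hq1, hq2, hq3, hq4, tsum_congr hq5]
  rw [inducedMultiplier]
  have hcc : ((c * c : ℝ) : ℂ) = (((m Y).toReal)⁻¹ : ℝ) := by
    rw [hc, ← mul_inv, Real.mul_self_sqrt ENNReal.toReal_nonneg]
  rw [hcc]
  push_cast
  congr 1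
  exact tsum_congr fun u => mul_comm _ _
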